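/- arXiv:2002.10517 — 7 statements merged into one kernel-verified Lean document; each statement's English description precedes it below -/
import Mathlib

section
/- (Theorem 3ψ, the fundamental Fierz-type identity underlying minimal supersymmetry in dimensions 3, 4, 6, 10.) For all column vectors Q₁, Q₂, Q₃ ∈ A² one has Γ(Q₁,Q₂)·Q₃ + Γ(Q₂,Q₃)·Q₁ + Γ(Q₃,Q₁)·Q₂ = 0 in A², where Γ(Q,Q′) is the 2×2 matrix over A defined below and · denotes matrix–vector multiplication. Equivalently, ρ(Γ(Q₁,Q₂))Q₃ + ρ(Γ(Q₂,Q₃))Q₁ + ρ(Γ(Q₃,Q₁))Q₂ = 0, where ρ(M)Q := M·Q is the Clifford action of the 'vector' M on the spinor Q. -/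
/-!
Write `x, y, z` and `u, v, w` for the `k`-th and the other components of `Q₁, Q₂, Q₃`, and
`B` for the polar form of `N`. Polarizing `a σ(a) = N(a)` makes the diagonal entries of
`Q·Q′† + Q′·Q†` scalars, so the `k`-th component of the sum is
`-B(u,v) z - B(v,w) x - B(w,u) y` plus six products `(a σ(b)) c`. These pair off as
`(x σ(v)) w + (x σ(w)) v`, etc., and each pair equals `B(v,w) x`, etc.: this is the polarization
in `c` of the composition identity `(x σ(c)) c = N(c) x`, which follows from
`σ(c) = 2 Re(c) - c` and right alternativity. Everything cancels.
-/

namespace Stmt0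

variable {A : Type*} [AddCommGroup A] [Module ℂ A]

/-- Matrix–vector multiplication of a 2×2 matrix over `A` with a column vector in `A²`. -/
def act (mul : A → A → A) (M : Fin 2 → Fin 2 → A) (Q : Fin 2 → A) : Fin 2 → A :=
  fun k => mul (M k 0) (Q 0) + mul (M k 1) (Q 1)

/-- The 2×2 matrix `Q·Q′† + Q′·Q†`, with `(k,l)` entry `q_k * σ(q′_l) + q′_k * σ(q_l)`. -/
def gammaRaw (mul : A → A → A) (σ : A → A) (Q Q' : Fin 2 → A) : Fin 2 → Fin 2 → A :=
  fun k l => mul (Q k) (σ (Q' l)) + mul (Q' k) (σ (Q l))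

/-- `M̃ = M − tr(M)·1₂`, where `tr(M) = M₀₀ + M₁₁`. -/
def tilde (M : Fin 2 → Fin 2 → A) : Fin 2 → Fin 2 → A :=
  fun k l => M k l - if k = l then M 0 0 + M 1 1 else 0

/-- The Γ-pairing `Γ(Q,Q′) = (Q·Q′† + Q′·Q†) − tr(Q·Q′† + Q′·Q†)·1₂`. -/
def Gamma (mul : A → A → A) (σ : A → A) (Q Q' : Fin 2 → A) : Fin 2 → Fin 2 → A :=
  tilde (gammaRaw mul σ Q Q')

end Stmt0

namespace Stmt0

section General

variable {A : Type*} [AddCommGroup A]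

theorem act_apply_eq (mul : A → A → A) (M : Fin 2 → Fin 2 → A) (Q : Fin 2 → A) (k : Fin 2) :
    act mul M Q k = mul (M k k) (Q k) + mul (M k k.rev) (Q k.rev) := by
  fin_cases k
  · rfl
  · exact add_comm _ _

theorem Gamma_apply_self (mul : A → A → A) (σ : A → A) (Q Q' : Fin 2 → A) (k : Fin 2) :
    Gamma mul σ Q Q' k k = -gammaRaw mul σ Q Q' k.rev k.rev := by
  fin_cases k <;> simp [Gamma, tilde]

theorem Gamma_apply_rev (mul : A → A → A) (σ : A → A) (Q Q' : Fin 2 → A) (k : Fin 2) :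
    Gamma mul σ Q Q' k k.rev = gammaRaw mul σ Q Q' k k.rev := by
  fin_cases k <;> simp [Gamma, tilde]

end General

section Composition

variable {R A : Type*} [CommRing R] [AddCommGroup A] [Module R A]
  (m : A →ₗ[R] A →ₗ[R] A) {one : A} {σ : A → A} {Re Nm : A → R}

theorem mul_conj_add_mul_conj (hσ_add : ∀ x y : A, σ (x + y) = σ x + σ y)
    (hNm : ∀ x : A, m x (σ x) = Nm x • one) (u v : A) :
    m u (σ v) + m v (σ u) = QuadraticMap.polar Nm u v • one := by
  have h := hNm (u + v)
  simp only [hσ_add, map_add, LinearMap.add_apply, hNm u, hNm v] at h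
  rw [QuadraticMap.polar, sub_smul, sub_smul, ← h]
  abel

theorem mul_conj_mul_self (hmul_one : ∀ x : A, m x one = x)
    (halt_right : ∀ x y : A, m (m x y) y = m x (m y y))
    (hRe : ∀ x : A, x + σ x = (2 * Re x) • one) (hNm : ∀ x : A, m x (σ x) = Nm x • one)
    (x c : A) :
    m (m x (σ c)) c = Nm c • x := by
  have hσ : σ c = (2 * Re c) • one - c := eq_sub_of_add_eq' (hRe c)
  calc m (m x (σ c)) c = (2 * Re c) • m x c - m x (m c c) := by
        rw [hσ, map_sub, map_smul, hmul_one, map_sub, LinearMap.sub_apply, map_smul,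
          LinearMap.smul_apply, halt_right]
    _ = m x (m c (σ c)) := by rw [hσ, map_sub, map_smul, hmul_one, map_sub, map_smul]
    _ = Nm c • x := by rw [hNm, map_smul, hmul_one]

theorem mul_conj_mul_add_mul_conj_mul (hmul_one : ∀ x : A, m x one = x)
    (halt_right : ∀ x y : A, m (m x y) y = m x (m y y))
    (hσ_add : ∀ x y : A, σ (x + y) = σ x + σ y)
    (hRe : ∀ x : A, x + σ x = (2 * Re x) • one) (hNm : ∀ x : A, m x (σ x) = Nm x • one)
    (x v w : A) :
    m (m x (σ v)) w + m (m x (σ w)) v = QuadraticMap.polar Nm v w • x := by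
  have hsq := mul_conj_mul_self m hmul_one halt_right hRe hNm x
  have h := hsq (v + w)
  simp only [hσ_add, map_add, LinearMap.add_apply, hsq v, hsq w] at h
  rw [QuadraticMap.polar, sub_smul, sub_smul, ← h]
  abel

theorem act_Gamma_apply (hone_mul : ∀ x : A, m one x = x)
    (hσ_add : ∀ x y : A, σ (x + y) = σ x + σ y) (hNm : ∀ x : A, m x (σ x) = Nm x • one)
    (Q Q' Q'' : Fin 2 → A) (k : Fin 2) :
    act (fun a b => m a b) (Gamma (fun a b => m a b) σ Q Q') Q'' k
      = -(QuadraticMap.polar Nm (Q k.rev) (Q' k.rev) • Q'' k)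
        + m (m (Q k) (σ (Q' k.rev))) (Q'' k.rev) + m (m (Q' k) (σ (Q k.rev))) (Q'' k.rev) := by
  rw [act_apply_eq, Gamma_apply_self, Gamma_apply_rev, gammaRaw, gammaRaw,
    mul_conj_add_mul_conj m hσ_add hNm]
  simp only [map_neg, map_smul, map_add, LinearMap.neg_apply, LinearMap.smul_apply,
    LinearMap.add_apply, hone_mul, add_assoc]

end Composition

variable {A : Type*} [AddCommGroup A] [Module ℂ A]

theorem three_psi_general
    (mul : A → A → A) (one : A) (σ : A → A) (Re Nm : A → ℂ)
    -- `mul` is ℂ-bilinear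
    (hmul_addl : ∀ x y z : A, mul (x + y) z = mul x z + mul y z)
    (hmul_addr : ∀ x y z : A, mul x (y + z) = mul x y + mul x z)
    (hmul_smull : ∀ (c : ℂ) (x y : A), mul (c • x) y = c • mul x y)
    (hmul_smulr : ∀ (c : ℂ) (x y : A), mul x (c • y) = c • mul x y)
    -- `one` is a unit
    (hone_mul : ∀ x : A, mul one x = x)
    (hmul_one : ∀ x : A, mul x one = x)
    -- `A` is alternative: the associator is alternating
    (halt_right : ∀ x y : A, mul (mul x y) y = mul x (mul y y))
    -- `σ` is a ℂ-linear anti-involution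
    (hσ_add : ∀ x y : A, σ (x + y) = σ x + σ y)
    -- real part and norm scalars
    (hRe : ∀ x : A, x + σ x = (2 * Re x) • one)
    (hNm : ∀ x : A, mul x (σ x) = Nm x • one)
    (Q₁ Q₂ Q₃ : Fin 2 → A) (k : Fin 2) :
    act mul (Gamma mul σ Q₁ Q₂) Q₃ k + act mul (Gamma mul σ Q₂ Q₃) Q₁ k
      + act mul (Gamma mul σ Q₃ Q₁) Q₂ k = 0 := by
  obtain ⟨m, rfl⟩ : ∃ m : A →ₗ[ℂ] A →ₗ[ℂ] A, mul = fun x y => m x y :=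
    ⟨LinearMap.mk₂ ℂ mul hmul_addl hmul_smull hmul_addr hmul_smulr, rfl⟩
  have hpair := mul_conj_mul_add_mul_conj_mul m hmul_one halt_right hσ_add hRe hNm
  simp only [act_Gamma_apply m hone_mul hσ_add hNm]
  rw [← hpair (Q₁ k), ← hpair (Q₂ k), ← hpair (Q₃ k)]
  abel

theorem three_psi
    (mul : A → A → A) (one : A) (σ : A → A) (Re Nm : A → ℂ)
    -- `mul` is ℂ-bilinear
    (hmul_addl : ∀ x y z : A, mul (x + y) z = mul x z + mul y z)
    (hmul_addr : ∀ x y z : A, mul x (y + z) = mul x y + mul x z)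
    (hmul_smull : ∀ (c : ℂ) (x y : A), mul (c • x) y = c • mul x y)
    (hmul_smulr : ∀ (c : ℂ) (x y : A), mul x (c • y) = c • mul x y)
    -- `one` is a unit
    (hone_mul : ∀ x : A, mul one x = x)
    (hmul_one : ∀ x : A, mul x one = x)
    -- `A` is alternative: the associator is alternating
    (halt_left : ∀ x y : A, mul (mul x x) y = mul x (mul x y))
    (halt_right : ∀ x y : A, mul (mul x y) y = mul x (mul y y))
    (halt_flex : ∀ x y : A, mul (mul x y) x = mul x (mul y x))
    -- `σ` is a ℂ-linear anti-involution
    (hσ_add : ∀ x y : A, σ (x + y) = σ x + σ y)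
    (hσ_smul : ∀ (c : ℂ) (x : A), σ (c • x) = c • σ x)
    (hσ_mul : ∀ x y : A, σ (mul x y) = mul (σ y) (σ x))
    (hσ_invol : ∀ x : A, σ (σ x) = x)
    (hσ_one : σ one = one)
    -- real part and norm scalars
    (hRe : ∀ x : A, x + σ x = (2 * Re x) • one)
    (hNm : ∀ x : A, mul x (σ x) = Nm x • one)
    -- nondegeneracy of the form `(x,y) ↦ Re(x·σ(y))`
    (hnondeg : ∀ x : A, (∀ y : A, Re (mul x (σ y)) = 0) → x = 0)
    (Q₁ Q₂ Q₃ : Fin 2 → A) (k : Fin 2) :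
    act mul (Gamma mul σ Q₁ Q₂) Q₃ k + act mul (Gamma mul σ Q₂ Q₃) Q₁ k
      + act mul (Gamma mul σ Q₃ Q₁) Q₂ k = 0 :=
  three_psi_general mul one σ Re Nm hmul_addl hmul_addr hmul_smull hmul_smulr hone_mul hmul_one
    halt_right hσ_add hRe hNm Q₁ Q₂ Q₃ k

end Stmt0
end

section
/- (Theorem 3ψ, 3-dimensional N=1 instance.) For all Q₁, Q₂, Q₃ ∈ ℂ²: Γ(Q₁,Q₂)·Q₃ + Γ(Q₂,Q₃)·Q₁ + Γ(Q₃,Q₁)·Q₂ = 0 in ℂ². -/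
/-!
Expanding `vecMulVec u v *ᵥ w = (v ⬝ᵥ w) • u` and `tr (vecMulVec u v) = u ⬝ᵥ v` gives
`Γ(u,v) w = (v ⬝ᵥ w) u + (u ⬝ᵥ w) v - 2 (u ⬝ᵥ v) w`. In the cyclic sum each `Qᵢ` then
occurs twice with coefficient `Qⱼ ⬝ᵥ Qₖ` and once with `-2 (Qⱼ ⬝ᵥ Qₖ)`, so everything cancels.
-/

namespace Stmt1

open Matrix

/-- The Γ-pairing of the 3d N=1 supersymmetry algebra in the division-algebra model. -/
noncomputable def Gamma (Q Q' : Fin 2 → ℂ) : Matrix (Fin 2) (Fin 2) ℂ :=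
  (vecMulVec Q Q' + vecMulVec Q' Q)
    - (Matrix.trace (vecMulVec Q Q' + vecMulVec Q' Q)) • (1 : Matrix (Fin 2) (Fin 2) ℂ)

theorem vecMulVec_add_vecMulVec_sub_trace_smul_one_mulVec {n R : Type*} [Fintype n]
    [DecidableEq n] [CommRing R] (u v w : n → R) :
    (vecMulVec u v + vecMulVec v u - trace (vecMulVec u v + vecMulVec v u) • 1) *ᵥ w =
      (v ⬝ᵥ w) • u + (u ⬝ᵥ w) • v - (2 * (u ⬝ᵥ v)) • w := by
  simp only [sub_mulVec, add_mulVec, smul_mulVec, one_mulVec, vecMulVec_mulVec, op_smul_eq_smul,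
    trace_add, trace_vecMulVec, dotProduct_comm v u, two_mul]

theorem Gamma_mulVec (Q Q' Q'' : Fin 2 → ℂ) :
    Gamma Q Q' *ᵥ Q'' = (Q' ⬝ᵥ Q'') • Q + (Q ⬝ᵥ Q'') • Q' - (2 * (Q ⬝ᵥ Q')) • Q'' :=
  vecMulVec_add_vecMulVec_sub_trace_smul_one_mulVec Q Q' Q''

theorem three_psi_3d (Q₁ Q₂ Q₃ : Fin 2 → ℂ) :
    Gamma Q₁ Q₂ *ᵥ Q₃ + Gamma Q₂ Q₃ *ᵥ Q₁ + Gamma Q₃ Q₁ *ᵥ Q₂ = 0 := by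
  simp only [Gamma_mulVec, dotProduct_comm Q₂ Q₁, dotProduct_comm Q₃ Q₁, dotProduct_comm Q₃ Q₂]
  module

end Stmt1
end

section
/- (Theorem 3ψ, 4-dimensional N=1 instance.) For all P₁, P₂, P₃, R₁, R₂, R₃ ∈ ℂ²: tilde(P₁·R₂ᵀ + P₂·R₁ᵀ)·P₃ + tilde(P₂·R₃ᵀ + P₃·R₂ᵀ)·P₁ + tilde(P₃·R₁ᵀ + P₁·R₃ᵀ)·P₂ = 0 in ℂ². -/
/-!
On ℂ², `tilde (P Rᵀ) v = (R·v) P - (R·P) v = ω(P, v) · R^⊥` with `ω(u, v) = u₀v₁ - u₁v₀`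
and `R^⊥ = (R₁, -R₀)`: the middle term has zero dot product with `R`, so it is a multiple
of `R^⊥`. Expanding the cyclic sum by linearity of `tilde`, each `R_b^⊥` then appears with
coefficient `ω(P_a, P_c) + ω(P_c, P_a) = 0`.
-/

namespace Stmt2

open Matrix

/-- `tilde(M) = M − tr(M)·1₂`. -/
noncomputable def tilde (M : Matrix (Fin 2) (Fin 2) ℂ) : Matrix (Fin 2) (Fin 2) ℂ :=
  M - (Matrix.trace M) • (1 : Matrix (Fin 2) (Fin 2) ℂ)

theorem dotProduct_smul_sub_dotProduct_smul_fin_two {α : Type*} [CommRing α]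
    (P R v : Fin 2 → α) :
    (R ⬝ᵥ v) • P - (R ⬝ᵥ P) • v = (P 0 * v 1 - P 1 * v 0) • ![R 1, -R 0] := by
  ext i
  fin_cases i <;>
    simp only [dotProduct, Fin.sum_univ_two, Fin.zero_eta, Fin.mk_one, Pi.sub_apply,
      Pi.smul_apply, smul_eq_mul, cons_val_zero, cons_val_one, cons_val_fin_one] <;>
    ring

theorem tilde_add (A B : Matrix (Fin 2) (Fin 2) ℂ) : tilde (A + B) = tilde A + tilde B := by
  simp only [tilde, trace_add, add_smul]
  abel

theorem tilde_vecMulVec_mulVec (P R v : Fin 2 → ℂ) :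
    tilde (vecMulVec P R) *ᵥ v = (P 0 * v 1 - P 1 * v 0) • ![R 1, -R 0] := by
  rw [tilde, sub_mulVec, smul_mulVec, one_mulVec, vecMulVec_mulVec, op_smul_eq_smul,
    trace_vecMulVec, dotProduct_comm P, dotProduct_smul_sub_dotProduct_smul_fin_two]

theorem three_psi_4d (P₁ P₂ P₃ R₁ R₂ R₃ : Fin 2 → ℂ) :
    tilde (vecMulVec P₁ R₂ + vecMulVec P₂ R₁) *ᵥ P₃
      + tilde (vecMulVec P₂ R₃ + vecMulVec P₃ R₂) *ᵥ P₁
      + tilde (vecMulVec P₃ R₁ + vecMulVec P₁ R₃) *ᵥ P₂ = 0 := by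
  simp only [tilde_add, add_mulVec, tilde_vecMulVec_mulVec]
  module

end Stmt2
end

section
/- (Classification of rank (2,2) square-zero supercharges in the 4d N=4 supersymmetry algebra by the invariant s ∈ ℂ×.) Let (A,B) be a pair of complex 4×2 matrices with rank A = 2, rank B = 2 and BᵀA = 0. Then: (i) there exists a complex 4×2 matrix D with BᵀD = 1₂, and the scalar s(A,B) := det of the 4×4 complex matrix whose first two columns are the columns of A and whose last two columns are the columns of D is independent of the choice of such D and is nonzero; (ii) two such pairs (A,B) and (A′,B′) lie in the same orbit of the action of SL(4,ℂ) given by g·(A,B) := (g·A, (gᵀ)⁻¹·B) if and only if s(A,B) = s(A′,B′). In particular, the Spin(6,ℂ) ≅ SL(4,ℂ) orbits of rank (2,2) square-zero supercharges are parameterized by the invariant s ∈ ℂ×. -/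
/-!
If `C` is a left inverse of `A` (it exists since `rank A = 2`) and `Bᵀ D = 1`, then
`[C; Bᵀ] · [A | D]` is block upper unitriangular, so `det [C; Bᵀ] · det [A | D] = 1`: the
determinant `s = det [A | D]` is the inverse of a number not involving `D`, hence independent of
`D` and nonzero. Since moreover `Bᵀ [A | D] = [0 | 1]`, the pair `(A, B)` is recovered from
`S = [A | D]`, and when `det S = det S'` the matrix `g = S' S⁻¹ ∈ SL(4)` carries `(A, B)` to
`(A', B')`. Conversely `g · (A, B)` admits the right inverse `g D`, and
`det [g A | g D] = det g · det [A | D]`.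
-/

namespace Stmt7

open Matrix

/-- A rank `(2,2)` square-zero supercharge: a pair `(A,B)` of complex 4×2 matrices
with `rank A = 2`, `rank B = 2` and `Bᵀ·A = 0`. -/
def IsRank22 (A B : Matrix (Fin 4) (Fin 2) ℂ) : Prop :=
  A.rank = 2 ∧ B.rank = 2 ∧ Bᵀ * A = 0

/-- Determinant of the 4×4 matrix whose first two columns are the columns of `A` and
whose last two columns are the columns of `D`. -/
noncomputable def sVal (A D : Matrix (Fin 4) (Fin 2) ℂ) : ℂ :=
  ((fromCols A D).submatrix id finSumFinEquiv.symm).det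

open scoped Classical in
/-- The invariant `s(A,B)`, computed using a choice of `D` with `Bᵀ·D = 1₂`. -/
noncomputable def sInv (A B : Matrix (Fin 4) (Fin 2) ℂ) : ℂ :=
  if h : ∃ D : Matrix (Fin 4) (Fin 2) ℂ, Bᵀ * D = 1 then sVal A h.choose else 0

/-- The `SL(4,ℂ)`-action: `g·(A,B) = (g·A, (gᵀ)⁻¹·B)`; two pairs lie in the same orbit. -/
def SameOrbit (A B A' B' : Matrix (Fin 4) (Fin 2) ℂ) : Prop :=
  ∃ g : Matrix (Fin 4) (Fin 4) ℂ, g.det = 1 ∧ A' = g * A ∧ B' = (gᵀ)⁻¹ * B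

section BlockCols

variable {R l l' n m₁ m₂ : Type*} (e : m₁ ⊕ m₂ ≃ n)

def blockCols (A : Matrix l m₁ R) (D : Matrix l m₂ R) : Matrix l n R :=
  (fromCols A D).submatrix id e.symm

theorem blockCols_inj {A A' : Matrix l m₁ R} {D D' : Matrix l m₂ R} :
    blockCols e A D = blockCols e A' D' ↔ A = A' ∧ D = D' := by
  refine ⟨fun h => fromCols_inj ?_, fun ⟨hA, hD⟩ => hA ▸ hD ▸ rfl⟩
  simpa [blockCols] using congrArg (·.submatrix id e) h

variable [CommRing R]

theorem mul_blockCols [Fintype l] (g : Matrix l' l R) (A : Matrix l m₁ R) (D : Matrix l m₂ R) :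
    g * blockCols e A D = blockCols e (g * A) (g * D) := by
  rw [blockCols, blockCols, ← mul_fromCols]
  rfl

variable [Fintype n] [DecidableEq n] [DecidableEq m₂]

theorem exists_det_eq_one_of_det_blockCols_eq {A A' : Matrix n m₁ R} {D D' : Matrix n m₂ R}
    {P P' : Matrix m₂ n R} (hPA : P * A = 0) (hPD : P * D = 1) (hPA' : P' * A' = 0)
    (hPD' : P' * D' = 1) (hS : IsUnit (blockCols e A D).det)
    (hdet : (blockCols e A D).det = (blockCols e A' D').det) :
    ∃ g : Matrix n n R, g.det = 1 ∧ A' = g * A ∧ D' = g * D ∧ P' * g = P := by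
  set S := blockCols e A D
  set S' := blockCols e A' D'
  have hgS : S' * S⁻¹ * S = S' := nonsing_inv_mul_cancel_right S S' hS
  refine ⟨S' * S⁻¹, ?_, ?_⟩
  · rw [det_mul, det_nonsing_inv, ← hdet, Ring.mul_inverse_cancel _ hS]
  · have hP : P' * S' = P * S := by
      rw [mul_blockCols, mul_blockCols, hPA, hPD, hPA', hPD']
    rw [mul_blockCols, blockCols_inj] at hgS
    refine ⟨hgS.1.symm, hgS.2.symm, ?_⟩
    rw [← Matrix.mul_assoc, hP, mul_nonsing_inv_cancel_right _ _ hS]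

variable [Fintype m₁] [Fintype m₂] [DecidableEq m₁]

theorem det_fromRows_mul_det_blockCols {A : Matrix n m₁ R} {D : Matrix n m₂ R}
    {C : Matrix m₁ n R} {P : Matrix m₂ n R} (hCA : C * A = 1) (hPA : P * A = 0)
    (hPD : P * D = 1) : ((fromRows C P).submatrix e.symm id).det * (blockCols e A D).det = 1 := by
  have hmul := submatrix_mul_equiv (fromRows C P) (fromCols A D) e.symm (Equiv.refl n) e.symm
  rw [Equiv.coe_refl] at hmul
  rw [← det_mul, blockCols, hmul, fromRows_mul_fromCols, hCA, hPA, hPD, det_submatrix_equiv_self,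
    det_fromBlocks_zero₂₁, det_one, det_one, mul_one]

end BlockCols

theorem exists_mul_eq_one_of_rank_eq_card {K m n : Type*} [Field K] [Fintype m] [DecidableEq m]
    [Fintype n] {M : Matrix m n K} (h : M.rank = Fintype.card m) :
    ∃ D : Matrix n m K, M * D = 1 := by
  have htop : LinearMap.range M.mulVecLin = ⊤ :=
    Submodule.eq_top_of_finrank_eq (by rw [← rank, h, Module.finrank_fintype_fun_eq_card])
  exact mulVec_surjective_iff_exists_right_inverse.mp (LinearMap.range_eq_top.mp htop)

theorem sVal_eq_det_blockCols (A D : Matrix (Fin 4) (Fin 2) ℂ) :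
    sVal A D = (blockCols finSumFinEquiv A D).det :=
  rfl

theorem sVal_mul (g : Matrix (Fin 4) (Fin 4) ℂ) (A D : Matrix (Fin 4) (Fin 2) ℂ) :
    sVal (g * A) (g * D) = g.det * sVal A D := by
  rw [sVal_eq_det_blockCols, sVal_eq_det_blockCols, ← mul_blockCols, det_mul]

namespace IsRank22

variable {A B : Matrix (Fin 4) (Fin 2) ℂ}

theorem exists_mul_eq_one (h : IsRank22 A B) : ∃ C : Matrix (Fin 2) (Fin 4) ℂ, C * A = 1 := by
  obtain ⟨C, hC⟩ :=
    exists_mul_eq_one_of_rank_eq_card (M := Aᵀ) (by rw [rank_transpose, h.1]; rfl)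
  exact ⟨Cᵀ, by rw [← transpose_transpose A, ← transpose_mul, hC, transpose_one]⟩

theorem exists_transpose_mul_eq_one (h : IsRank22 A B) :
    ∃ D : Matrix (Fin 4) (Fin 2) ℂ, Bᵀ * D = 1 :=
  exists_mul_eq_one_of_rank_eq_card (by rw [rank_transpose, h.2.1]; rfl)

theorem exists_mul_sVal_eq_one (h : IsRank22 A B) :
    ∃ c : ℂ, ∀ D : Matrix (Fin 4) (Fin 2) ℂ, Bᵀ * D = 1 → c * sVal A D = 1 := by
  obtain ⟨C, hC⟩ := h.exists_mul_eq_one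
  exact ⟨_, fun D hD => det_fromRows_mul_det_blockCols _ hC h.2.2 hD⟩

theorem sVal_ne_zero (h : IsRank22 A B) {D : Matrix (Fin 4) (Fin 2) ℂ} (hD : Bᵀ * D = 1) :
    sVal A D ≠ 0 := by
  obtain ⟨c, hc⟩ := h.exists_mul_sVal_eq_one
  exact right_ne_zero_of_mul_eq_one (hc D hD)

theorem sVal_eq_sVal (h : IsRank22 A B) {D D' : Matrix (Fin 4) (Fin 2) ℂ} (hD : Bᵀ * D = 1)
    (hD' : Bᵀ * D' = 1) : sVal A D = sVal A D' := by
  obtain ⟨c, hc⟩ := h.exists_mul_sVal_eq_one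
  rw [eq_inv_of_mul_eq_one_right (hc D hD), eq_inv_of_mul_eq_one_right (hc D' hD')]

theorem sInv_eq (h : IsRank22 A B) {D : Matrix (Fin 4) (Fin 2) ℂ} (hD : Bᵀ * D = 1) :
    sInv A B = sVal A D := by
  have hex : ∃ D : Matrix (Fin 4) (Fin 2) ℂ, Bᵀ * D = 1 := ⟨D, hD⟩
  rw [sInv, dif_pos hex]
  exact h.sVal_eq_sVal hex.choose_spec hD

end IsRank22

theorem eq_inv_transpose_mul_iff {R n m : Type*} [CommRing R] [Fintype n] [DecidableEq n]
    {g : Matrix n n R} (hg : IsUnit g.det) {B B' : Matrix n m R} :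
    B' = (gᵀ)⁻¹ * B ↔ B'ᵀ * g = Bᵀ := by
  have := invertibleOfIsUnitDet gᵀ (isUnit_det_transpose g hg)
  rw [eq_comm, inv_mul_eq_iff_eq_mul_of_invertible, eq_comm, ← transpose_inj, transpose_mul,
    transpose_transpose]

theorem sameOrbit_iff {A B A' B' : Matrix (Fin 4) (Fin 2) ℂ} :
    SameOrbit A B A' B' ↔
      ∃ g : Matrix (Fin 4) (Fin 4) ℂ, g.det = 1 ∧ A' = g * A ∧ B'ᵀ * g = Bᵀ := by
  refine exists_congr fun g => and_congr_right fun hg => and_congr_right fun _ => ?_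
  exact eq_inv_transpose_mul_iff (hg ▸ isUnit_one)

theorem sameOrbit_iff_sInv_eq {A B A' B' : Matrix (Fin 4) (Fin 2) ℂ} (h : IsRank22 A B)
    (h' : IsRank22 A' B') : SameOrbit A B A' B' ↔ sInv A B = sInv A' B' := by
  obtain ⟨D, hD⟩ := h.exists_transpose_mul_eq_one
  obtain ⟨D', hD'⟩ := h'.exists_transpose_mul_eq_one
  rw [sameOrbit_iff, h.sInv_eq hD, h'.sInv_eq hD']
  constructor
  · rintro ⟨g, hg, rfl, hB⟩
    have hgD : B'ᵀ * (g * D) = 1 := by rw [← Matrix.mul_assoc, hB, hD]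
    rw [h'.sVal_eq_sVal hD' hgD, sVal_mul, hg, one_mul]
  · intro hs
    obtain ⟨g, hg, hA, -, hB⟩ := exists_det_eq_one_of_det_blockCols_eq finSumFinEquiv h.2.2 hD
      h'.2.2 hD' (isUnit_iff_ne_zero.mpr (h.sVal_ne_zero hD)) hs
    exact ⟨g, hg, hA, hB⟩

theorem rank22_classification :
    -- (i) existence of `D`, independence of the invariant from the choice of `D`, nonvanishing
    (∀ A B : Matrix (Fin 4) (Fin 2) ℂ, IsRank22 A B →
      (∃ D : Matrix (Fin 4) (Fin 2) ℂ, Bᵀ * D = 1) ∧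
      (∀ D : Matrix (Fin 4) (Fin 2) ℂ, Bᵀ * D = 1 → sVal A D = sInv A B) ∧
      sInv A B ≠ 0) ∧
    -- (ii) two pairs lie in the same `SL(4,ℂ)`-orbit iff they have the same invariant
    (∀ A B A' B' : Matrix (Fin 4) (Fin 2) ℂ, IsRank22 A B → IsRank22 A' B' →
      (SameOrbit A B A' B' ↔ sInv A B = sInv A' B')) := by
  refine ⟨fun A B h => ?_, fun A B A' B' h h' => sameOrbit_iff_sInv_eq h h'⟩
  obtain ⟨D, hD⟩ := h.exists_transpose_mul_eq_one
  exact ⟨⟨D, hD⟩, fun D' hD' => (h.sInv_eq hD').symm, h.sInv_eq hD ▸ h.sVal_ne_zero hD⟩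

end Stmt7
end

section
/- (In the 6d N=(1,0) supersymmetry algebra, a supercharge squares to zero if and only if it has rank at most 1.) For q₀, q₁ ∈ M₂(ℂ): one has det(q₀) = 0, det(q₁) = 0, q₀·adj(q₁) = 0 and q₁·adj(q₀) = 0 if and only if the 4×2 complex matrix obtained by stacking q₀ on top of q₁ has rank ≤ 1. Hence a nonzero supercharge in the 6d N=(1,0) supersymmetry algebra squares to zero if and only if it has rank 1 as an element of S₊⊗W₊. -/
/-!
Both conditions say that every 2×2 minor of the stacked 4×2 matrix vanishes. Indeed, the entry
`(a, b)` of `p * adjugate q` is, up to sign, the minor formed by row `a` of `p` and row `b` of `q`,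
and `q * adjugate q = det q • 1`. A matrix with two columns has rank at most one exactly when all
its 2×2 minors vanish: a nonzero minor is an invertible 2×2 submatrix, and if they all vanish then
every row is a multiple of a fixed nonzero row.
-/

namespace Stmt12

open Matrix

noncomputable def adj (x : Matrix (Fin 2) (Fin 2) ℂ) : Matrix (Fin 2) (Fin 2) ℂ :=
  (Matrix.trace x) • (1 : Matrix (Fin 2) (Fin 2) ℂ) - x

section TwoColumns

variable {K m : Type*} [Field K]

theorem exists_smul_eq_of_mul_eq_mul {u w : Fin 2 → K} (hu : u ≠ 0)
    (h : u 0 * w 1 = u 1 * w 0) : ∃ a : K, a • u = w := by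
  by_contra! hw
  have hli : LinearIndependent K (of ![w, u]).row := linearIndependent_fin2.mpr ⟨hu, hw⟩
  rw [linearIndependent_rows_iff_isUnit, isUnit_iff_isUnit_det, isUnit_iff_ne_zero,
    det_fin_two] at hli
  apply hli
  simp only [of_apply, cons_val', cons_val_fin_one, cons_val_zero, cons_val_one]
  linear_combination -h

theorem rank_le_one_iff_forall_mul_eq (M : Matrix m (Fin 2) K) :
    M.rank ≤ 1 ↔ ∀ i j, M i 0 * M j 1 = M i 1 * M j 0 := by
  constructor
  · intro hM i j
    by_contra hij
    have hdet : (M.submatrix ![i, j] id).det ≠ 0 := by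
      rw [det_fin_two]
      simpa [sub_eq_zero] using hij
    have hminor := rank_of_isUnit _ ((isUnit_iff_isUnit_det _).mpr hdet.isUnit)
    have hle := rank_submatrix_le M ![i, j] id
    rw [Fintype.card_fin] at hminor
    omega
  · intro h
    by_cases hM : M = 0
    · simp [hM]
    obtain ⟨i₀, hi₀⟩ : ∃ i₀, M i₀ ≠ 0 := by
      by_contra! h0
      exact hM (funext h0)
    choose c hc using fun i ↦ exists_smul_eq_of_mul_eq_mul hi₀ (h i₀ i)
    have hM_eq : M = vecMulVec c (M i₀) := by
      ext i j
      simp [vecMulVec_apply, ← hc i]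
    rw [hM_eq]
    exact rank_vecMulVec_le _ _

end TwoColumns

section Adjugate

variable {R : Type*} [CommRing R]

theorem mul_adjugate_eq_zero_iff (p q : Matrix (Fin 2) (Fin 2) R) :
    p * adjugate q = 0 ↔ ∀ a b, p a 0 * q b 1 = p a 1 * q b 0 := by
  simp only [adjugate_fin_two, ← ext_iff, mul_apply, of_apply, cons_val', cons_val_fin_one,
    Fin.sum_univ_two, cons_val_zero, cons_val_one, Matrix.zero_apply, Fin.forall_fin_two,
    mul_neg, ← sub_eq_add_neg, sub_eq_zero, neg_add_eq_zero]
  tauto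

theorem det_eq_zero_iff_mul_adjugate_self_eq_zero (q : Matrix (Fin 2) (Fin 2) R) :
    q.det = 0 ↔ q * adjugate q = 0 := by
  rw [mul_adjugate, smul_one_eq_diagonal, diagonal_eq_zero, funext_iff]
  simp

end Adjugate

theorem adj_eq_adjugate (x : Matrix (Fin 2) (Fin 2) ℂ) : adj x = adjugate x := by
  ext i j
  fin_cases i <;> fin_cases j <;> simp [adj, adjugate_fin_two, trace_fin_two]

theorem squareZero_6d (q₀ q₁ : Matrix (Fin 2) (Fin 2) ℂ) :
    (q₀.det = 0 ∧ q₁.det = 0 ∧ q₀ * adj q₁ = 0 ∧ q₁ * adj q₀ = 0) ↔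
      (fromRows q₀ q₁).rank ≤ 1 := by
  simp only [adj_eq_adjugate, det_eq_zero_iff_mul_adjugate_self_eq_zero, mul_adjugate_eq_zero_iff,
    rank_le_one_iff_forall_mul_eq, Sum.forall, fromRows_apply_inl, fromRows_apply_inr, forall_and]
  tauto

end Stmt12
end

section
/- (The 3d N=1 supersymmetry algebra admits no nonzero square-zero supercharges.) If Q ∈ ℂ² satisfies Q·Qᵀ = (Q⬝Q)·1₂, then Q = 0. -/
/-!
Off the diagonal `Q·Qᵀ = c·1` gives `Qᵢ Qⱼ = 0`, on the diagonal `Qᵢ² = c = Qⱼ²`; hence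
`Qᵢ⁴ = Qᵢ² Qⱼ² = (Qᵢ Qⱼ)² = 0`, and `Qᵢ = 0` in any reduced ring once there is an index `j ≠ i`.
-/

namespace Stmt13

open Matrix

theorem eq_zero_of_vecMulVec_self_eq_smul_one {R ι : Type*} [CommRing R] [IsReduced R]
    [DecidableEq ι] [Nontrivial ι] {v : ι → R} {c : R}
    (h : vecMulVec v v = c • (1 : Matrix ι ι R)) : v = 0 := by
  ext i
  obtain ⟨j, hji⟩ := exists_ne i
  have hdiag (k : ι) : v k * v k = c := by
    simpa [vecMulVec_apply] using congrFun (congrFun h k) k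
  have hoff : v i * v j = 0 := by
    simpa [vecMulVec_apply, one_apply, hji.symm] using congrFun (congrFun h i) j
  have hpow : v i ^ 4 = 0 := calc
    v i ^ 4 = (v i * v i) * (v i * v i) := by ring
    _ = (v i * v i) * (v j * v j) := by rw [hdiag i, hdiag j]
    _ = (v i * v j) ^ 2 := by ring
    _ = 0 := by rw [hoff]; ring
  exact IsReduced.eq_zero _ ⟨4, hpow⟩

theorem no_squareZero_3d_N1 (Q : Fin 2 → ℂ)
    (h : vecMulVec Q Q = (Q ⬝ᵥ Q) • (1 : Matrix (Fin 2) (Fin 2) ℂ)) : Q = 0 :=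
  eq_zero_of_vecMulVec_self_eq_smul_one h

end Stmt13
end

section
/- (Compatibility of the Γ-pairing with the action of two-forms on spinors.) For all v₁, v₂ ∈ V and Q₁, Q₂ ∈ M, setting X := ι(v₁)·ι(v₂) − B(v₁,v₂)·1 ∈ Cl(V): Γ(Q₁, X•Q₂) + Γ(Q₂, X•Q₁) = −2·( B(Γ(Q₁,Q₂), v₁)·v₂ − B(Γ(Q₁,Q₂), v₂)·v₁ ). (This is the identity Γ(Q₁, ρ(X)Q₂) + Γ(Q₂, ρ(X)Q₁) = −2·ι_{Γ(Q₁,Q₂)}X for the two-form X = v₁∧v₂, where ∧²V acts on spinors through the quantization map q(v₁∧v₂) = v₁v₂ − (v₁,v₂) and ι_w(v₁∧v₂) := B(w,v₁)v₂ − B(w,v₂)v₁.) -/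
/-!
Pair both sides with an arbitrary `w : V` through `B`. The adjoint of the Clifford action with
respect to `φ` is reversion, and `φ` is symmetric once one argument lies in `ι w • M`, so the
left side becomes `φ((reverse X * w + w * X) • Q₁, Q₂)`. Because `B` is symmetric, the Clifford
relation gives `reverse X = -X`, so this is the commutator `[w, X]`, which the same relation
evaluates to `2 ι(B(w,v₁) v₂ - B(w,v₂) v₁)`; nondegeneracy of `B` concludes.
-/

namespace Stmt14

open CliffordAlgebra

noncomputable def qf {V : Type*} [AddCommGroup V] [Module ℂ V]
    (B : V →ₗ[ℂ] V →ₗ[ℂ] ℂ) : QuadraticForm ℂ V :=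
  LinearMap.BilinMap.toQuadraticMap B

open QuadraticMap

section Clifford

variable {R V : Type*} [CommRing R] [AddCommGroup V] [Module R V] {Q : QuadraticForm R V}

theorem ι_commutator_ι_mul_ι (w x y : V) :
    ι Q w * (ι Q x * ι Q y) - ι Q x * ι Q y * ι Q w =
      ι Q (polar Q w x • y - polar Q w y • x) := by
  rw [← mul_assoc, eq_sub_of_add_eq (ι_mul_ι_add_swap w x), sub_mul, mul_assoc (ι Q x),
    eq_sub_of_add_eq (ι_mul_ι_add_swap w y), mul_sub, map_sub, map_smul, map_smul,
    Algebra.smul_def, Algebra.smul_def, ← Algebra.commutes _ (ι Q x), mul_assoc]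
  abel

theorem ι_commutator_ι_mul_ι_sub_algebraMap (w x y : V) (c : R) :
    ι Q w * (ι Q x * ι Q y - algebraMap R _ c) - (ι Q x * ι Q y - algebraMap R _ c) * ι Q w =
      ι Q (polar Q w x • y - polar Q w y • x) := by
  rw [← ι_commutator_ι_mul_ι, mul_sub, sub_mul, Algebra.commutes]
  abel

theorem reverse_ι_mul_ι_sub_algebraMap {x y : V} {c : R} (hc : polar Q x y = 2 * c) :
    reverse (ι Q x * ι Q y - algebraMap R _ c) = -(ι Q x * ι Q y - algebraMap R _ c) := by
  rw [map_sub, reverse.map_mul, reverse_ι, reverse_ι, reverse.commutes,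
    eq_sub_of_add_eq' (ι_mul_ι_add_swap x y), hc, two_mul, map_add]
  abel

end Clifford

section Pairing

variable {R V M : Type*} [CommRing R] [AddCommGroup V] [Module R V] {Q : QuadraticForm R V}
  [AddCommGroup M] [Module R M] [Module (CliffordAlgebra Q) M]
  [IsScalarTower R (CliffordAlgebra Q) M] {φ : M →ₗ[R] M →ₗ[R] R}

theorem apply_smul_eq_apply_reverse_smul (hφ : ∀ v m m', φ (ι Q v • m) m' = φ m (ι Q v • m'))
    (a : CliffordAlgebra Q) (m m' : M) : φ m (a • m') = φ (reverse a • m) m' := by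
  induction a using CliffordAlgebra.induction generalizing m m' with
  | algebraMap r => simp only [reverse.commutes, algebraMap_smul, map_smul, LinearMap.smul_apply]
  | ι v => rw [reverse_ι, hφ]
  | mul a b iha ihb => rw [mul_smul, iha, ihb, reverse.map_mul, mul_smul]
  | add a b iha ihb =>
    rw [add_smul, map_add, iha, ihb, map_add, add_smul, map_add, LinearMap.add_apply]

theorem apply_ι_smul_smul_add_apply_ι_smul_smul
    (hmove : ∀ v m m', φ (ι Q v • m) m' = φ m (ι Q v • m'))
    (hsymm : ∀ v m m', φ (ι Q v • m) m' = φ (ι Q v • m') m)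
    (w : V) (a : CliffordAlgebra Q) (m m' : M) :
    φ (ι Q w • m) (a • m') + φ (ι Q w • m') (a • m) =
      φ ((reverse a * ι Q w + ι Q w * a) • m) m' := by
  rw [apply_smul_eq_apply_reverse_smul hmove, hsymm, add_smul, mul_smul, mul_smul, map_add,
    LinearMap.add_apply]

end Pairing

theorem polar_qf {V : Type*} [AddCommGroup V] [Module ℂ V] {B : V →ₗ[ℂ] V →ₗ[ℂ] ℂ}
    (hB : ∀ v w, B v w = B w v) (x y : V) : polar (qf B) x y = 2 * B x y := by
  rw [qf, LinearMap.BilinMap.polar_toQuadraticMap, hB y, two_mul]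

theorem gamma_two_form_general
    {V : Type*} [AddCommGroup V] [Module ℂ V]
    (B : V →ₗ[ℂ] V →ₗ[ℂ] ℂ)
    (hB_symm : ∀ v w : V, B v w = B w v)
    (hB_nondeg : ∀ v : V, (∀ w : V, B v w = 0) → v = 0)
    -- `M` is a module over the Clifford algebra of `(V, v ↦ B(v,v))`
    {M : Type*} [AddCommGroup M] [Module ℂ M]
    [Module (CliffordAlgebra (qf B)) M]
    [IsScalarTower ℂ (CliffordAlgebra (qf B)) M]
    -- the pairing `φ` is ℂ-bilinear and compatible with the Clifford action
    (φ : M → M → ℂ)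
    (hφ_addl : ∀ m m' n : M, φ (m + m') n = φ m n + φ m' n)
    (hφ_addr : ∀ m n n' : M, φ m (n + n') = φ m n + φ m n')
    (hφ_smull : ∀ (c : ℂ) (m n : M), φ (c • m) n = c * φ m n)
    (hφ_smulr : ∀ (c : ℂ) (m n : M), φ m (c • n) = c * φ m n)
    (hφ_move : ∀ (v : V) (m m' : M),
      φ (ι (qf B) v • m) m' = φ m (ι (qf B) v • m'))
    (hφ_symm : ∀ (v : V) (m m' : M),
      φ (ι (qf B) v • m) m' = φ (ι (qf B) v • m') m)
    -- the Γ-pairing is ℂ-bilinear and dual to the Clifford action via `B`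
    (Γ : M → M → V)
    (hΓ_def : ∀ (v : V) (m m' : M), B v (Γ m m') = φ (ι (qf B) v • m) m')
    (v₁ v₂ : V) (Q₁ Q₂ : M) :
    Γ Q₁ ((ι (qf B) v₁ * ι (qf B) v₂
        - algebraMap ℂ (CliffordAlgebra (qf B)) (B v₁ v₂)) • Q₂)
      + Γ Q₂ ((ι (qf B) v₁ * ι (qf B) v₂
        - algebraMap ℂ (CliffordAlgebra (qf B)) (B v₁ v₂)) • Q₁)
      = (-2 : ℂ) • (B (Γ Q₁ Q₂) v₁ • v₂ - B (Γ Q₁ Q₂) v₂ • v₁) := by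
  set X := ι (qf B) v₁ * ι (qf B) v₂ - algebraMap ℂ (CliffordAlgebra (qf B)) (B v₁ v₂)
  have hX : reverse X = -X := reverse_ι_mul_ι_sub_algebraMap (polar_qf hB_symm v₁ v₂)
  refine sub_eq_zero.mp (hB_nondeg _ fun w => ?_)
  have hpair := apply_ι_smul_smul_add_apply_ι_smul_smul
    (φ := LinearMap.mk₂ ℂ φ hφ_addl hφ_smull hφ_addr hφ_smulr) hφ_move hφ_symm w X Q₁ Q₂
  rw [hX, neg_mul, neg_add_eq_sub, ι_commutator_ι_mul_ι_sub_algebraMap] at hpair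
  rw [hB_symm, map_sub, sub_eq_zero, map_add, hΓ_def, hΓ_def]
  refine hpair.trans ?_
  rw [LinearMap.mk₂_apply, ← hΓ_def]
  simp only [map_sub, map_smul, LinearMap.sub_apply, LinearMap.smul_apply, smul_eq_mul,
    polar_qf hB_symm]
  rw [hB_symm v₁, hB_symm v₂]
  ring

theorem gamma_two_form
    {V : Type*} [AddCommGroup V] [Module ℂ V] [FiniteDimensional ℂ V]
    (B : V →ₗ[ℂ] V →ₗ[ℂ] ℂ)
    (hB_symm : ∀ v w : V, B v w = B w v)
    (hB_nondeg : ∀ v : V, (∀ w : V, B v w = 0) → v = 0)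
    -- `M` is a module over the Clifford algebra of `(V, v ↦ B(v,v))`
    {M : Type*} [AddCommGroup M] [Module ℂ M]
    [Module (CliffordAlgebra (qf B)) M]
    [IsScalarTower ℂ (CliffordAlgebra (qf B)) M]
    -- the pairing `φ` is ℂ-bilinear and compatible with the Clifford action
    (φ : M → M → ℂ)
    (hφ_addl : ∀ m m' n : M, φ (m + m') n = φ m n + φ m' n)
    (hφ_addr : ∀ m n n' : M, φ m (n + n') = φ m n + φ m n')
    (hφ_smull : ∀ (c : ℂ) (m n : M), φ (c • m) n = c * φ m n)
    (hφ_smulr : ∀ (c : ℂ) (m n : M), φ m (c • n) = c * φ m n)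
    (hφ_move : ∀ (v : V) (m m' : M),
      φ (ι (qf B) v • m) m' = φ m (ι (qf B) v • m'))
    (hφ_symm : ∀ (v : V) (m m' : M),
      φ (ι (qf B) v • m) m' = φ (ι (qf B) v • m') m)
    -- the Γ-pairing is ℂ-bilinear and dual to the Clifford action via `B`
    (Γ : M → M → V)
    (hΓ_addl : ∀ m m' n : M, Γ (m + m') n = Γ m n + Γ m' n)
    (hΓ_addr : ∀ m n n' : M, Γ m (n + n') = Γ m n + Γ m n')
    (hΓ_smull : ∀ (c : ℂ) (m n : M), Γ (c • m) n = c • Γ m n)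
    (hΓ_smulr : ∀ (c : ℂ) (m n : M), Γ m (c • n) = c • Γ m n)
    (hΓ_def : ∀ (v : V) (m m' : M), B v (Γ m m') = φ (ι (qf B) v • m) m')
    (v₁ v₂ : V) (Q₁ Q₂ : M) :
    Γ Q₁ ((ι (qf B) v₁ * ι (qf B) v₂
        - algebraMap ℂ (CliffordAlgebra (qf B)) (B v₁ v₂)) • Q₂)
      + Γ Q₂ ((ι (qf B) v₁ * ι (qf B) v₂
        - algebraMap ℂ (CliffordAlgebra (qf B)) (B v₁ v₂)) • Q₁)
      = (-2 : ℂ) • (B (Γ Q₁ Q₂) v₁ • v₂ - B (Γ Q₁ Q₂) v₂ • v₁) :=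
  gamma_two_form_general B hB_symm hB_nondeg φ hφ_addl hφ_addr hφ_smull hφ_smulr hφ_move hφ_symm Γ
    hΓ_def v₁ v₂ Q₁ Q₂

end Stmt14
end
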